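/- For any garbling q₂ on player 2's signals and any payoff function g, val(v.q₂, g) ≥ val(v, g); and for any garbling q₁ on player 1's signals, val(u, g) ≥ val(q₁.u, g). That is, the value of a zero-sum Bayesian game is weakly decreasing when player 1's information is garbled and weakly increasing when player 2's information is garbled. -/

import Mathlib

open scoped BigOperators

noncomputable section

/-- A probability distribution on a finite type, given as a nonnegative function summing to 1. -/
def IsDist {α : Type*} [Fintype α] (u : α → ℝ) : Prop :=
  (∀ a, 0 ≤ u a) ∧ ∑ a, u a = 1

/-- A garbling (stochastic map / behavioral strategy). -/
def IsKernel {α β : Type*} [Fintype β] (q : α → β → ℝ) : Prop :=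
  ∀ a, IsDist (q a)

/-- Expected payoff in the zero-sum Bayesian game `Γ(u,g)` when players use
behavioral strategies `σ` and `τ`. -/
def pay {K C D I J : Type*} [Fintype K] [Fintype C] [Fintype D] [Fintype I] [Fintype J]
    (u : K × C × D → ℝ) (g : K → I → J → ℝ) (σ : C → I → ℝ) (τ : D → J → ℝ) : ℝ :=
  ∑ k, ∑ c, ∑ d, ∑ i, ∑ j, u (k, c, d) * σ c i * τ d j * g k i j

/-- The value (maxmin) of the zero-sum Bayesian game `Γ(u,g)`, player 1 maximizing. -/
def gameVal {K C D I J : Type*} [Fintype K] [Fintype C] [Fintype D] [Fintype I] [Fintype J]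
    (u : K × C × D → ℝ) (g : K → I → J → ℝ) : ℝ :=
  sSup {x : ℝ | ∃ σ : C → I → ℝ, IsKernel σ ∧
    x = sInf {y : ℝ | ∃ τ : D → J → ℝ, IsKernel τ ∧ y = pay u g σ τ}}

/-- Garbling of player 1's signal: `(q.u)(k,c,d) = ∑ c', u(k,c',d) q(c|c')`. -/
def garbleL {K C C' D : Type*} [Fintype C] (q : C → C' → ℝ) (u : K × C × D → ℝ) :
    K × C' × D → ℝ :=
  fun x => ∑ c, u (x.1, c, x.2.2) * q c x.2.1

/-- Garbling of player 2's signal: `(u.q)(k,c,d) = ∑ d', u(k,c,d') q(d|d')`. -/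
def garbleR {K C D D' : Type*} [Fintype D] (q : D → D' → ℝ) (u : K × C × D → ℝ) :
    K × C × D' → ℝ :=
  fun x => ∑ d, u (x.1, x.2.1, d) * q d x.2.2

/-- ℓ¹ distance. -/
def l1 {α : Type*} [Fintype α] (u v : α → ℝ) : ℝ := ∑ a, |u a - v a|

/-- Payoff functions bounded by 1. -/
def Bounded1 {K I J : Type*} (g : K → I → J → ℝ) : Prop := ∀ k i j, |g k i j| ≤ 1

/-- The value-based distance: sup over all finite zero-sum games (with nonempty
finite action sets, payoffs bounded by 1) of the absolute difference of values. -/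
def valueDist {K C D C' D' : Type*} [Fintype K] [Fintype C] [Fintype D] [Fintype C'] [Fintype D']
    (u : K × C × D → ℝ) (v : K × C' × D' → ℝ) : ℝ :=
  sSup {x : ℝ | ∃ (m n : ℕ) (g : K → Fin (m + 1) → Fin (n + 1) → ℝ),
    Bounded1 g ∧ x = |gameVal u g - gameVal v g|}

/-- Value of a single-agent decision problem on a single-agent information structure. -/
def val1 {K C I : Type*} [Fintype K] [Fintype C] [Fintype I] [Nonempty I]
    (u : K × C → ℝ) (g : K → I → ℝ) : ℝ :=
  ∑ c, ⨆ i, ∑ k, u (k, c) * g k i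

/-- The single-agent value-based distance. -/
def valueDist1 {K C C' : Type*} [Fintype K] [Fintype C] [Fintype C']
    (u : K × C → ℝ) (v : K × C' → ℝ) : ℝ :=
  sSup {x : ℝ | ∃ (m : ℕ) (g : K → Fin (m + 1) → ℝ),
    (∀ k i, |g k i| ≤ 1) ∧ x = |val1 u g - val1 v g|}

/-- Garbling of the signal in a single-agent structure. -/
def garble1 {K C C' : Type*} [Fintype C] (q : C → C' → ℝ) (u : K × C → ℝ) : K × C' → ℝ :=
  fun x => ∑ c, u (x.1, c) * q c x.2

end

/-! Whatever player 2 can do on the garbled signal `q₂ d` she can already do on `d`, by first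
drawing the garbled signal herself: against every strategy of player 1, the strategy `τ` in
`v.q₂` and the strategy "`q₂`, then `τ`" in `v` give the same payoff. So each strategy of player 1
guarantees at least as much in `v.q₂` as in `v`. Symmetrically, a strategy `σ` of player 1 in
`q₁.u` is matched by "`q₁`, then `σ`" in `u`, with the same payoff against every `τ`. -/

open Finset

section Kernels

variable {α β γ : Type*} [Fintype β] [Fintype γ]

theorem IsKernel.le_one {q : α → β → ℝ} (hq : IsKernel q) (a : α) (b : β) : q a b ≤ 1 :=
  (hq a).2 ▸ single_le_sum (fun b _ => (hq a).1 b) (mem_univ b)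

theorem IsKernel.abs_le_one {q : α → β → ℝ} (hq : IsKernel q) (a : α) (b : β) : |q a b| ≤ 1 :=
  abs_le.2 ⟨by linarith [(hq a).1 b], hq.le_one a b⟩

theorem isKernel_uniform [Nonempty β] : IsKernel fun (_ : α) (_ : β) => (Fintype.card β : ℝ)⁻¹ :=
  fun _ => ⟨fun _ => by positivity, by simp⟩

instance [Nonempty β] : Nonempty {q : α → β → ℝ // IsKernel q} :=
  ⟨⟨_, isKernel_uniform⟩⟩

def kernelComp (q : α → β → ℝ) (σ : β → γ → ℝ) : α → γ → ℝ :=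
  fun a c => ∑ b, q a b * σ b c

theorem IsKernel.kernelComp {q : α → β → ℝ} {σ : β → γ → ℝ} (hq : IsKernel q)
    (hσ : IsKernel σ) : IsKernel (kernelComp q σ) := by
  refine fun a => ⟨fun c => sum_nonneg fun b _ => mul_nonneg ((hq a).1 b) ((hσ b).1 c), ?_⟩
  simp only [_root_.kernelComp]
  rw [sum_comm]
  simp [← mul_sum, fun b => (hσ b).2, (hq a).2]

end Kernels

theorem abs_mul_mul_mul_le {a s t b : ℝ} (hs : |s| ≤ 1) (ht : |t| ≤ 1) :
    |a * s * t * b| ≤ |a * b| :=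
  calc |a * s * t * b| = |a * b| * (|s| * |t|) := by simp only [abs_mul]; ring
    _ ≤ |a * b| * 1 := by gcongr; exact mul_le_one₀ hs (abs_nonneg t) ht
    _ = |a * b| := mul_one _

theorem setOf_exists_and_eq_eq_range {α β : Type*} (p : α → Prop) (f : α → β) :
    {b | ∃ a, p a ∧ b = f a} = Set.range fun a : Subtype p => f a := by
  ext b
  simp [eq_comm]

section Game

variable {K C D I J : Type*} [Fintype K] [Fintype C] [Fintype D] [Fintype I] [Fintype J]

noncomputable def securityLevel (u : K × C × D → ℝ) (g : K → I → J → ℝ) (σ : C → I → ℝ) : ℝ :=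
  ⨅ τ : {τ : D → J → ℝ // IsKernel τ}, pay u g σ τ

theorem gameVal_eq_iSup_securityLevel (u : K × C × D → ℝ) (g : K → I → J → ℝ) :
    gameVal u g = ⨆ σ : {σ : C → I → ℝ // IsKernel σ}, securityLevel u g σ := by
  simp only [gameVal, securityLevel, iSup, iInf, setOf_exists_and_eq_eq_range]

theorem abs_pay_le (u : K × C × D → ℝ) (g : K → I → J → ℝ) {σ : C → I → ℝ} {τ : D → J → ℝ}
    (hσ : IsKernel σ) (hτ : IsKernel τ) :
    |pay u g σ τ| ≤ ∑ k, ∑ c, ∑ d, ∑ i, ∑ j, |u (k, c, d) * g k i j| := by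
  unfold pay
  iterate 5 refine (abs_sum_le_sum_abs _ _).trans (sum_le_sum fun _ _ => ?_)
  exact abs_mul_mul_mul_le (hσ.abs_le_one _ _) (hτ.abs_le_one _ _)

theorem bddBelow_range_pay (u : K × C × D → ℝ) (g : K → I → J → ℝ) {σ : C → I → ℝ}
    (hσ : IsKernel σ) : BddBelow (Set.range fun τ : {τ : D → J → ℝ // IsKernel τ} => pay u g σ τ) :=
  ⟨_, by rintro _ ⟨τ, rfl⟩; exact neg_le_of_abs_le (abs_pay_le u g hσ τ.2)⟩

theorem bddAbove_range_securityLevel [Nonempty J] (u : K × C × D → ℝ) (g : K → I → J → ℝ) :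
    BddAbove (Set.range fun σ : {σ : C → I → ℝ // IsKernel σ} => securityLevel u g σ) := by
  obtain ⟨τ⟩ := (inferInstance : Nonempty {τ : D → J → ℝ // IsKernel τ})
  exact ⟨_, Set.forall_mem_range.2 fun σ =>
    (ciInf_le (bddBelow_range_pay u g σ.2) τ).trans (le_of_abs_le (abs_pay_le u g σ.2 τ.2))⟩

theorem pay_garbleL {C' : Type*} [Fintype C'] (u : K × C × D → ℝ) (g : K → I → J → ℝ)
    (q : C → C' → ℝ) (σ : C' → I → ℝ) (τ : D → J → ℝ) :
    pay (garbleL q u) g σ τ = pay u g (kernelComp q σ) τ := by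
  simp only [pay, garbleL, kernelComp, sum_mul, mul_sum]
  simp_rw [sum_comm (s := (univ : Finset C')), sum_comm (s := (univ : Finset C)), mul_assoc]

theorem pay_garbleR {D' : Type*} [Fintype D'] (u : K × C × D → ℝ) (g : K → I → J → ℝ)
    (q : D → D' → ℝ) (σ : C → I → ℝ) (τ : D' → J → ℝ) :
    pay (garbleR q u) g σ τ = pay u g σ (kernelComp q τ) := by
  simp only [pay, garbleR, kernelComp, sum_mul, mul_sum]
  simp_rw [sum_comm (s := (univ : Finset D')), sum_comm (s := (univ : Finset D))]
  simp only [mul_assoc, mul_comm, mul_left_comm]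

theorem securityLevel_garbleL {C' : Type*} [Fintype C'] (u : K × C × D → ℝ)
    (g : K → I → J → ℝ) (q : C → C' → ℝ) (σ : C' → I → ℝ) :
    securityLevel (garbleL q u) g σ = securityLevel u g (kernelComp q σ) := by
  simp only [securityLevel, pay_garbleL]

theorem securityLevel_le_garbleR [Nonempty J] {D' : Type*} [Fintype D'] (v : K × C × D → ℝ)
    (g : K → I → J → ℝ) {q : D → D' → ℝ} (hq : IsKernel q) {σ : C → I → ℝ} (hσ : IsKernel σ) :
    securityLevel v g σ ≤ securityLevel (garbleR q v) g σ := by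
  refine le_ciInf fun τ => ?_
  rw [pay_garbleR]
  exact ciInf_le (bddBelow_range_pay v g hσ) ⟨_, hq.kernelComp τ.2⟩

theorem gameVal_le_gameVal_garbleR [Nonempty J] {D' : Type*} [Fintype D']
    (v : K × C × D → ℝ) (g : K → I → J → ℝ) {q : D → D' → ℝ} (hq : IsKernel q) :
    gameVal v g ≤ gameVal (garbleR q v) g := by
  rw [gameVal_eq_iSup_securityLevel, gameVal_eq_iSup_securityLevel]
  exact ciSup_mono (bddAbove_range_securityLevel _ g) fun σ => securityLevel_le_garbleR v g hq σ.2

theorem gameVal_garbleL_le_gameVal [Nonempty I] [Nonempty J] {C' : Type*} [Fintype C']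
    (u : K × C × D → ℝ) (g : K → I → J → ℝ) {q : C → C' → ℝ} (hq : IsKernel q) :
    gameVal (garbleL q u) g ≤ gameVal u g := by
  rw [gameVal_eq_iSup_securityLevel, gameVal_eq_iSup_securityLevel]
  refine ciSup_le fun σ => ?_
  rw [securityLevel_garbleL]
  exact le_ciSup (bddAbove_range_securityLevel u g) ⟨_, hq.kernelComp σ.2⟩

end Game

theorem stmt3_general {K C D I J : Type*} [Fintype K] [Fintype C] [Fintype D]
    [Fintype I] [Nonempty I] [Fintype J] [Nonempty J]
    (u v : K × C × D → ℝ)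
    (q₁ : C → C → ℝ) (q₂ : D → D → ℝ) (hq₁ : IsKernel q₁) (hq₂ : IsKernel q₂)
    (g : K → I → J → ℝ) :
    gameVal v g ≤ gameVal (garbleR q₂ v) g ∧ gameVal (garbleL q₁ u) g ≤ gameVal u g :=
  ⟨gameVal_le_gameVal_garbleR v g hq₂, gameVal_garbleL_le_gameVal u g hq₁⟩

theorem stmt3 {K C D I J : Type*} [Fintype K] [Fintype C] [Fintype D]
    [Fintype I] [Nonempty I] [Fintype J] [Nonempty J]
    (u v : K × C × D → ℝ) (hu : IsDist u) (hv : IsDist v)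
    (q₁ : C → C → ℝ) (q₂ : D → D → ℝ) (hq₁ : IsKernel q₁) (hq₂ : IsKernel q₂)
    (g : K → I → J → ℝ) (hg : Bounded1 g) :
    gameVal v g ≤ gameVal (garbleR q₂ v) g ∧ gameVal (garbleL q₁ u) g ≤ gameVal u g :=
  stmt3_general u v q₁ q₂ hq₁ hq₂ g
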